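/- Let 𝔤 be a real Lie algebra, Ω : 𝔤 × 𝔤 → ℝ an alternating bilinear form satisfying the 2-cocycle identity Ω([X,Y],Z) + Ω([Y,Z],X) + Ω([Z,X],Y) = 0, and j : 𝔤 → 𝔤 a linear map with j∘j = −id and Ω(jX, jY) = Ω(X, Y) for all X, Y. Then the algebraic Nijenhuis tensor N^j satisfies the cyclic identity Ω(N^j(X,Y),Z) + Ω(N^j(Y,Z),X) + Ω(N^j(Z,X),Y) = 0 for all X, Y, Z ∈ 𝔤. -/
import Mathlib


/-- The algebraic Nijenhuis tensor of a linear map `j` on a Lie algebra. -/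
def algNijenhuis {𝔤 : Type*} [LieRing 𝔤] [LieAlgebra ℝ 𝔤] (j : 𝔤 →ₗ[ℝ] 𝔤) (X Y : 𝔤) : 𝔤 :=
  ⁅j X, j Y⁆ - j ⁅j X, Y⁆ - j ⁅X, j Y⁆ - ⁅X, Y⁆

/-- If `Ω` is an alternating 2-cocycle on a real Lie algebra `𝔤` and
`j` is a linear map with `j ∘ j = -id` and `Ω (j X) (j Y) = Ω X Y`, then the algebraic
Nijenhuis tensor `N^j` satisfies the cyclic identity
`Ω (N^j X Y) Z + Ω (N^j Y Z) X + Ω (N^j Z X) Y = 0`. -/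
theorem stmt_1 (𝔤 : Type*) [LieRing 𝔤] [LieAlgebra ℝ 𝔤]
    (Ω : 𝔤 →ₗ[ℝ] 𝔤 →ₗ[ℝ] ℝ)
    (hΩalt : ∀ X : 𝔤, Ω X X = 0)
    (hcocycle : ∀ X Y Z : 𝔤, Ω ⁅X, Y⁆ Z + Ω ⁅Y, Z⁆ X + Ω ⁅Z, X⁆ Y = 0)
    (j : 𝔤 →ₗ[ℝ] 𝔤)
    (hj2 : ∀ X : 𝔤, j (j X) = -X)
    (hcompat : ∀ X Y : 𝔤, Ω (j X) (j Y) = Ω X Y) :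
    ∀ X Y Z : 𝔤,
      Ω (algNijenhuis j X Y) Z + Ω (algNijenhuis j Y Z) X + Ω (algNijenhuis j Z X) Y = 0 := by
  have hconj : ∀ W U : 𝔤, Ω (j W) U = -Ω W (j U) := by
    intro W U
    have := hcompat W (j U)
    rw [hj2 U] at this
    simp only [map_neg] at this
    linarith
  intro X Y Z
  simp only [algNijenhuis, map_sub, LinearMap.sub_apply, LinearMap.map_sub]
  rw [hconj ⁅j X, Y⁆ Z, hconj ⁅X, j Y⁆ Z, hconj ⁅j Y, Z⁆ X, hconj ⁅Y, j Z⁆ X,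
    hconj ⁅j Z, X⁆ Y, hconj ⁅Z, j X⁆ Y]
  linear_combination hcocycle (j X) (j Y) Z + hcocycle (j Y) (j Z) X +
    hcocycle (j Z) (j X) Y - hcocycle X Y Z
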